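/- arXiv:2107.06787 — 4 statements merged into one kernel-verified Lean document; each statement's English description precedes it below -/
import Mathlib

section
/- Let φ, ψ : ℝ → ℝ be smooth compactly supported functions. With the Fourier transform 𝓕φ(ξ) = ∫_ℝ φ(x) e^{−2πi x ξ} dx, one has Im ∫₀^∞ 𝓕φ(p) · conj(𝓕ψ(p)) · p dp = −(1/(4π)) ∫_ℝ φ′(x) ψ(x) dx, where φ′ is the derivative of φ. (Equivalently, the right-hand side equals (1/(4π)) ∫_ℝ φ(x) ψ′(x) dx, since ∫_ℝ (φψ)′ = 0.) -/
open MeasureTheory Set Real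
open scoped FourierTransform ComplexConjugate

/-- A smooth compactly supported function is a Schwartz function. -/
noncomputable def mkSchwartzAux (f : ℝ → ℂ) (hf : ContDiff ℝ ((⊤ : ℕ∞) : WithTop ℕ∞) f)
    (hfc : HasCompactSupport f) : SchwartzMap ℝ ℂ where
  toFun := f
  smooth' := hf
  decay' := by
    intro k n
    have hcont : Continuous fun x : ℝ => ‖x‖ ^ k * ‖iteratedFDeriv ℝ n f x‖ :=
      (continuous_norm.pow k).mul (hf.continuous_iteratedFDeriv (by exact_mod_cast le_top)).norm
    have hsupp : HasCompactSupport fun x : ℝ => ‖x‖ ^ k * ‖iteratedFDeriv ℝ n f x‖ :=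
      ((hfc.iteratedFDeriv (n := n)).norm).mul_left
    obtain ⟨C, hC⟩ := hcont.bounded_above_of_compact_support hsupp
    refine ⟨C, fun x => ?_⟩
    have h := hC x
    rw [Real.norm_eq_abs, abs_of_nonneg (by positivity)] at h
    exact h

set_option maxHeartbeats 1000000 in
/-- For real smooth compactly supported `φ, ψ`,
`Im ∫₀^∞ 𝓕φ(p) conj(𝓕ψ(p)) p dp = -(1/(4π)) ∫ φ'(x) ψ(x) dx`. -/
theorem stmt_4 (φ ψ : ℝ → ℝ)
    (hφ : ContDiff ℝ (⊤ : ℕ∞) φ) (hφc : HasCompactSupport φ)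
    (hψ : ContDiff ℝ (⊤ : ℕ∞) ψ) (hψc : HasCompactSupport ψ) :
    (∫ p in Ioi (0 : ℝ),
        FourierTransform.fourier (fun x => (φ x : ℂ)) p *
          (starRingEnd ℂ) (FourierTransform.fourier (fun x => (ψ x : ℂ)) p) * (p : ℂ)).im
      = -(1 / (4 * Real.pi)) * ∫ x, deriv φ x * ψ x := by
  have hπ : (π : ℝ) ≠ 0 := Real.pi_ne_zero
  replace hφ : ContDiff ℝ ((⊤ : ℕ∞) : WithTop ℕ∞) φ := hφ.of_le (by simp)
  replace hψ : ContDiff ℝ ((⊤ : ℕ∞) : WithTop ℕ∞) ψ := hψ.of_le (by simp)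
  set f : ℝ → ℂ := fun x => (φ x : ℂ) with hf_def
  set g : ℝ → ℂ := fun x => (ψ x : ℂ) with hg_def
  have hfC : ContDiff ℝ ((⊤ : ℕ∞) : WithTop ℕ∞) f := Complex.ofRealCLM.contDiff.comp hφ
  have hgC : ContDiff ℝ ((⊤ : ℕ∞) : WithTop ℕ∞) g := Complex.ofRealCLM.contDiff.comp hψ
  have hfc : HasCompactSupport f := hφc.comp_left Complex.ofReal_zero
  have hgc : HasCompactSupport g := hψc.comp_left Complex.ofReal_zero
  have hderiv : deriv f = fun x => Complex.ofReal (deriv φ x) := by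
    funext x
    exact (((hφ.differentiable (by simp)) x).hasDerivAt.ofReal_comp).deriv
  have hdC : ContDiff ℝ ((⊤ : ℕ∞) : WithTop ℕ∞) (deriv f) := by
    rw [hderiv]
    exact Complex.ofRealCLM.contDiff.comp ((contDiff_infty_iff_deriv.mp hφ).2)
  have hdc : HasCompactSupport (deriv f) := hfc.deriv
  set Φ : SchwartzMap ℝ ℂ := mkSchwartzAux f hfC hfc with hΦ_def
  set Ψ : SchwartzMap ℝ ℂ := mkSchwartzAux g hgC hgc with hΨ_def
  have int_f : Integrable f := Φ.integrable
  have int_g : Integrable g := Ψ.integrable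
  have int_df : Integrable (deriv f) := (mkSchwartzAux _ hdC hdc).integrable
  set F : ℝ → ℂ := 𝓕 f with hF_def
  set G : ℝ → ℂ := 𝓕 g with hG_def
  have int_F : Integrable F := (SchwartzMap.fourierTransformCLM ℂ Φ).integrable
  have int_G : Integrable G := (SchwartzMap.fourierTransformCLM ℂ Ψ).integrable
  have hFcont : Continuous F := (SchwartzMap.fourierTransformCLM ℂ Φ).continuous
  have hGcont : Continuous G := (SchwartzMap.fourierTransformCLM ℂ Ψ).continuous
  -- conjugation symmetry for real functions
  have conj_fourier : ∀ (h : ℝ → ℝ) (p : ℝ),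
      conj (𝓕 (fun x => (h x : ℂ)) p) = 𝓕 (fun x => (h x : ℂ)) (-p) := by
    intro h p
    rw [Real.fourier_eq', Real.fourier_eq', ← integral_conj]
    congr 1
    funext x
    simp only [smul_eq_mul, map_mul, ← Complex.exp_conj, Complex.conj_ofReal, Complex.conj_I,
      RCLike.inner_apply, conj_trivial]
    congr 2
    push_cast
    ring
  have conj_F : ∀ p, conj (F p) = F (-p) := conj_fourier φ
  have conj_G : ∀ p, conj (G p) = G (-p) := conj_fourier ψ
  set K : ℝ → ℂ := fun p => F p * conj (G p) * (p : ℂ) with hK_def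
  -- integrability of K
  obtain ⟨C, hC⟩ : ∃ C, ∀ p, ‖F p‖ ≤ C := by
    obtain ⟨C, hC⟩ := (SchwartzMap.fourierTransformCLM ℂ Φ).decay 0 0
    exact ⟨C, fun p => by have h := hC.2 p; simp at h; exact h⟩
  have intGp : Integrable (fun p : ℝ => ‖p‖ ^ 1 * ‖G p‖) :=
    (SchwartzMap.fourierTransformCLM ℂ Ψ).integrable_pow_mul (volume) 1
  have intK : Integrable K := by
    have hmeas : AEStronglyMeasurable K volume :=
      (((hFcont.mul (Complex.continuous_conj.comp hGcont)).mul
        Complex.continuous_ofReal)).aestronglyMeasurable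
    refine ((intGp.const_mul C).mono' hmeas ?_)
    filter_upwards with p
    have h1 : ‖K p‖ = ‖F p‖ * ‖G p‖ * ‖p‖ := by
      simp [hK_def, norm_mul]
    rw [h1, pow_one]
    have h2 : (0:ℝ) ≤ ‖G p‖ := norm_nonneg _
    have h3 : (0:ℝ) ≤ ‖p‖ := norm_nonneg _
    nlinarith [hC p, mul_nonneg h2 h3]
  set I0 : ℂ := ∫ p in Ioi (0:ℝ), K p with hI0_def
  -- negation symmetry
  have hKneg : ∀ p : ℝ, K (-p) = -conj (K p) := by
    intro p
    simp only [hK_def]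
    rw [← conj_F p, ← conj_G p]
    simp only [map_mul, Complex.conj_conj, Complex.conj_ofReal, Complex.ofReal_neg]
    ring
  have hIic : ∫ p in Iic (0:ℝ), K p = -conj I0 := by
    have h1 : ∫ p in Ioi (0:ℝ), K (-p) = ∫ p in Iic (-(0:ℝ)), K p :=
      integral_comp_neg_Ioi 0 K
    rw [neg_zero] at h1
    rw [← h1]
    simp_rw [hKneg]
    rw [integral_neg, integral_conj]
  have hsplit : ∫ p, K p = I0 - conj I0 := by
    rw [← intervalIntegral.integral_Iic_add_Ioi intK.integrableOn intK.integrableOn, hIic]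
    ring
  have h2im : (∫ p, K p).im = 2 * I0.im := by
    rw [hsplit]
    simp [Complex.sub_im, Complex.conj_im]
    ring
  -- Fourier transform of derivative
  have hFd : 𝓕 (deriv f) = fun p : ℝ => (2 * π * Complex.I * p) • F p :=
    Real.fourier_deriv int_f (hfC.differentiable (by simp)) int_df
  have h2πI : (2 * (π:ℂ) * Complex.I) ≠ 0 := by
    simp [Real.pi_ne_zero, Complex.I_ne_zero, Complex.ofReal_ne_zero]
  have hKform : ∀ p : ℝ, K p = (1 / (2 * (π:ℂ) * Complex.I)) * (𝓕 (deriv f) p * conj (G p)) := by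
    intro p
    rw [hFd]
    simp only [hK_def, smul_eq_mul]
    field_simp
  -- conj G is the inverse Fourier transform of g
  have hu_eq : (fun p => conj (G p)) = 𝓕⁻ g := by
    funext p
    rw [conj_G p, hG_def, ← Real.fourierInv_eq_fourier_neg]
  have hu : Integrable fun p : ℝ => conj (G p) :=
    ⟨(Complex.continuous_conj.comp hGcont).aestronglyMeasurable,
      int_G.hasFiniteIntegral.congr' (Filter.Eventually.of_forall fun p => by simp)⟩
  have hFu : 𝓕 (fun p => conj (G p)) = g := by
    rw [hu_eq]
    exact hgC.continuous.fourier_fourierInv_eq int_g int_G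
  -- multiplication formula (self-adjointness of the Fourier transform)
  have hflip : (innerₗ ℝ).flip = innerₗ ℝ := by
    apply LinearMap.ext; intro x; apply LinearMap.ext; intro y
    simp only [LinearMap.flip_apply]
    exact real_inner_comm x y
  have hmult : ∫ p, 𝓕 (deriv f) p * conj (G p)
      = ∫ x, deriv f x * 𝓕 (fun p => conj (G p)) x := by
    have h := VectorFourier.integral_fourierIntegral_smul_eq_flip (L := innerₗ ℝ)
      Real.continuous_fourierChar continuous_inner int_df hu
    rw [hflip] at h
    simp [smul_eq_mul] at h; exact h
  have hK_int_eq : ∫ p, K p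
      = (1 / (2 * (π:ℂ) * Complex.I)) * ((∫ x, deriv φ x * ψ x : ℝ) : ℂ) := by
    calc ∫ p, K p
        = ∫ p, (1 / (2 * (π:ℂ) * Complex.I)) * (𝓕 (deriv f) p * conj (G p)) := by
          simp_rw [← hKform]
      _ = (1 / (2 * (π:ℂ) * Complex.I)) * ∫ p, 𝓕 (deriv f) p * conj (G p) :=
          integral_const_mul _ _
      _ = (1 / (2 * (π:ℂ) * Complex.I)) * ∫ x, deriv f x * g x := by
          rw [hmult, hFu]
      _ = _ := by
          congr 1
          rw [hderiv, hg_def]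
          beta_reduce
          norm_cast
  have him : (∫ p, K p).im = -(1 / (2 * π)) * ∫ x, deriv φ x * ψ x := by
    rw [hK_int_eq, one_div, mul_inv, Complex.inv_I]
    have h9 : ((2:ℂ) * (π:ℂ))⁻¹ = ((((2*π)⁻¹ : ℝ)):ℂ) := by push_cast; ring
    rw [h9]
    simp only [Complex.mul_im, Complex.mul_re, Complex.ofReal_re, Complex.ofReal_im,
      Complex.neg_re, Complex.neg_im, Complex.I_re, Complex.I_im]
    field_simp
    ring
  have hfinal : 2 * I0.im = -(1 / (2 * π)) * ∫ x, deriv φ x * ψ x := by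
    rw [← h2im, him]
  show I0.im = _
  have hπ' : (0:ℝ) < π := Real.pi_pos
  field_simp at hfinal ⊢
  linarith
end

section
/- In ℝ⁴ with coordinates (x₀, x₁, x₂, x₃), let W₀ = {x ∈ ℝ⁴ : x₁ > |x₀|} be the right wedge, let C = {v ∈ ℝ⁴ : v₀ > √(v₁² + v₂² + v₃²)} be the open forward light cone, and for s ∈ ℝ let Λ_s : ℝ⁴ → ℝ⁴ be the Lorentz boost Λ_s(x₀, x₁, x₂, x₃) = (x₀ cosh s + x₁ sinh s, x₀ sinh s + x₁ cosh s, x₂, x₃). Then for every point p ∈ W₀, letting O_p = {Λ_s(p) : s ∈ ℝ} be the boost orbit of p, one has W₀ = (O_p + C) ∩ (O_p − C), where O_p ± C = {q ± c : q ∈ O_p, c ∈ C}. -/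
open Set Pointwise

/-- The Lorentz boost of rapidity `s` in the `x₁` direction of Minkowski space `ℝ⁴`. -/
noncomputable def boost (s : ℝ) (x : Fin 4 → ℝ) : Fin 4 → ℝ :=
  ![x 0 * Real.cosh s + x 1 * Real.sinh s,
    x 0 * Real.sinh s + x 1 * Real.cosh s, x 2, x 3]

/-- The standard right wedge `W₀ = {x : x₁ > |x₀|}`. -/
def rightWedge : Set (Fin 4 → ℝ) := {x | |x 0| < x 1}

/-- The open forward light cone `{v : v₀ > √(v₁² + v₂² + v₃²)}`. -/
noncomputable def lightCone : Set (Fin 4 → ℝ) :=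
  {v | Real.sqrt ((v 1) ^ 2 + (v 2) ^ 2 + (v 3) ^ 2) < v 0}

lemma boost_apply0 (s : ℝ) (x : Fin 4 → ℝ) :
    boost s x 0 = x 0 * Real.cosh s + x 1 * Real.sinh s := rfl

lemma boost_apply1 (s : ℝ) (x : Fin 4 → ℝ) :
    boost s x 1 = x 0 * Real.sinh s + x 1 * Real.cosh s := rfl

lemma boost_apply2 (s : ℝ) (x : Fin 4 → ℝ) : boost s x 2 = x 2 := rfl

lemma boost_apply3 (s : ℝ) (x : Fin 4 → ℝ) : boost s x 3 = x 3 := rfl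

/-- Points of the light cone have `v₀ > |v₁|`. -/
lemma cone_abs {v : Fin 4 → ℝ} (hv : v ∈ lightCone) : |v 1| < v 0 := by
  have h : Real.sqrt ((v 1) ^ 2 + (v 2) ^ 2 + (v 3) ^ 2) < v 0 := hv
  have h2 : Real.sqrt ((v 1) ^ 2) ≤ Real.sqrt ((v 1) ^ 2 + (v 2) ^ 2 + (v 3) ^ 2) :=
    Real.sqrt_le_sqrt (by nlinarith [sq_nonneg (v 2), sq_nonneg (v 3)])
  calc |v 1| = Real.sqrt ((v 1) ^ 2) := (Real.sqrt_sq_eq_abs _).symm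
    _ ≤ _ := h2
    _ < v 0 := h

/-- Key scalar lemma: boosting far enough into the past, the point `x` lies strictly in
the future cone of the boosted point. -/
lemma key (p0 p1 x0 x1 k : ℝ) (hp : |p0| < p1) (hx : |x0| < x1) (hk : 0 ≤ k) :
    ∃ s : ℝ, 0 < x0 - (p0 * Real.cosh s + p1 * Real.sinh s) ∧
      (x1 - (p0 * Real.sinh s + p1 * Real.cosh s)) ^ 2 + k <
        (x0 - (p0 * Real.cosh s + p1 * Real.sinh s)) ^ 2 := by
  have hp0 : 0 ≤ |p0| := abs_nonneg _
  have hx0 : 0 ≤ |x0| := abs_nonneg _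
  have hp1 : 0 < p1 := lt_of_le_of_lt hp0 hp
  have hx1 : 0 < x1 := lt_of_le_of_lt hx0 hx
  have hpa : -|p0| ≤ p0 := neg_abs_le p0
  have hpb : p0 ≤ |p0| := le_abs_self p0
  have hxa : -|x0| ≤ x0 := neg_abs_le x0
  have hxb : x0 ≤ |x0| := le_abs_self x0
  have hm : 0 < (x1 + x0) * (p1 - p0) := mul_pos (by linarith) (by linarith)
  obtain ⟨y, hy0, hy1, hy2⟩ : ∃ y : ℝ, 0 < y ∧
      k + x1 ^ 2 - x0 ^ 2 + p1 ^ 2 - p0 ^ 2 < 2 * ((x1 + x0) * (p1 - p0)) * y ∧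
      |p0| + |x0| < y * (p1 - |p0|) := by
    set z : ℝ := max ((k + x1 ^ 2 - x0 ^ 2 + p1 ^ 2 - p0 ^ 2) / (2 * ((x1 + x0) * (p1 - p0))) + 1)
        ((|p0| + |x0|) / (p1 - |p0|) + 1) with hz
    have hA : (k + x1 ^ 2 - x0 ^ 2 + p1 ^ 2 - p0 ^ 2) / (2 * ((x1 + x0) * (p1 - p0))) + 1 ≤ z :=
      le_max_left _ _
    have hB : (|p0| + |x0|) / (p1 - |p0|) + 1 ≤ z := le_max_right _ _
    clear_value z
    have hdiv : 0 ≤ (|p0| + |x0|) / (p1 - |p0|) := div_nonneg (by linarith) (by linarith)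
    refine ⟨z, by linarith, ?_, ?_⟩
    · have h := (div_le_iff₀ (by linarith : (0:ℝ) < 2 * ((x1 + x0) * (p1 - p0)))).1
        (show (k + x1 ^ 2 - x0 ^ 2 + p1 ^ 2 - p0 ^ 2) / (2 * ((x1 + x0) * (p1 - p0))) ≤ z - 1
          by linarith)
      nlinarith
    · have h := (div_le_iff₀ (by linarith : (0:ℝ) < p1 - |p0|)).1
        (show (|p0| + |x0|) / (p1 - |p0|) ≤ z - 1 by linarith)
      nlinarith
  set c : ℝ := Real.sqrt (1 + y ^ 2) with hc_def
  have hc2 : c ^ 2 = 1 + y ^ 2 := Real.sq_sqrt (by positivity)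
  have hc0 : 0 ≤ c := Real.sqrt_nonneg _
  have hcy : y ≤ c := by
    calc y = Real.sqrt (y ^ 2) := (Real.sqrt_sq hy0.le).symm
      _ ≤ c := Real.sqrt_le_sqrt (by linarith)
  have hcle : c ≤ y + 1 := by
    calc c ≤ Real.sqrt ((y + 1) ^ 2) := Real.sqrt_le_sqrt (by nlinarith)
      _ = y + 1 := Real.sqrt_sq (by linarith)
  have hA : 0 ≤ x1 * p1 - x0 * p0 := by nlinarith
  have hkey : 0 ≤ (c - y) * (x1 * p1 - x0 * p0) := mul_nonneg (by linarith) hA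
  have hpc : p0 * c ≤ |p0| * (y + 1) := by nlinarith
  have main : k + x1 ^ 2 - x0 ^ 2 + p1 ^ 2 - p0 ^ 2 <
      2 * (c * (x1 * p1 - x0 * p0) + y * (x0 * p1 - x1 * p0)) := by
    have h1 : 2 * ((x1 + x0) * (p1 - p0)) * y ≤
        2 * (c * (x1 * p1 - x0 * p0) + y * (x0 * p1 - x1 * p0)) := by linarith [hkey]
    linarith [hy1]
  have hsq : (x0 - (p0 * c + p1 * -y)) ^ 2 - (x1 - (p0 * -y + p1 * c)) ^ 2
      = x0 ^ 2 - x1 ^ 2 + (p0 ^ 2 - p1 ^ 2)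
        + 2 * (c * (x1 * p1 - x0 * p0) + y * (x0 * p1 - x1 * p0)) := by
    linear_combination (p0 ^ 2 - p1 ^ 2) * hc2
  refine ⟨-Real.arsinh y, ?_, ?_⟩ <;>
    rw [Real.cosh_neg, Real.sinh_neg, Real.sinh_arsinh, Real.cosh_arsinh, ← hc_def]
  · linarith [hpc, hy2, hxa]
  · linarith [main, hsq]

/-- For every `p ∈ W₀`, the wedge `W₀` is the causal convex hull of the boost orbit of
`p`: `W₀ = (O_p + C) ∩ (O_p - C)`. -/
theorem stmt_11 (p : Fin 4 → ℝ) (hp : p ∈ rightWedge) :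
    rightWedge =
      ({q | ∃ s : ℝ, q = boost s p} + lightCone) ∩
      ({q | ∃ s : ℝ, q = boost s p} - lightCone) := by
  have hp' : |p 0| < p 1 := hp
  ext x
  simp only [mem_inter_iff]
  constructor
  · intro hx
    have hx' : |x 0| < x 1 := hx
    constructor
    · -- future part : x ∈ orbit + C
      obtain ⟨s, h1, h2⟩ := key (p 0) (p 1) (x 0) (x 1)
        ((x 2 - p 2) ^ 2 + (x 3 - p 3) ^ 2) hp' hx' (by positivity)
      refine Set.mem_add.2 ⟨boost s p, ⟨s, rfl⟩, x - boost s p, ?_, by abel⟩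
      have e0 : (x - boost s p) 0 = x 0 - (p 0 * Real.cosh s + p 1 * Real.sinh s) := rfl
      have e1 : (x - boost s p) 1 = x 1 - (p 0 * Real.sinh s + p 1 * Real.cosh s) := rfl
      have e2 : (x - boost s p) 2 = x 2 - p 2 := rfl
      have e3 : (x - boost s p) 3 = x 3 - p 3 := rfl
      show Real.sqrt (((x - boost s p) 1) ^ 2 + ((x - boost s p) 2) ^ 2
          + ((x - boost s p) 3) ^ 2) < (x - boost s p) 0
      rw [e0, e1, e2, e3, Real.sqrt_lt' h1]
      nlinarith [h2]
    · -- past part : x ∈ orbit - C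
      obtain ⟨s, h1, h2⟩ := key (-(p 0)) (p 1) (-(x 0)) (x 1)
        ((x 2 - p 2) ^ 2 + (x 3 - p 3) ^ 2) (by rwa [abs_neg]) (by rwa [abs_neg])
        (by positivity)
      refine Set.mem_sub.2 ⟨boost (-s) p, ⟨-s, rfl⟩, boost (-s) p - x, ?_, by abel⟩
      have e0 : (boost (-s) p - x) 0
          = (p 0 * Real.cosh (-s) + p 1 * Real.sinh (-s)) - x 0 := rfl
      have e1 : (boost (-s) p - x) 1
          = (p 0 * Real.sinh (-s) + p 1 * Real.cosh (-s)) - x 1 := rfl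
      have e2 : (boost (-s) p - x) 2 = p 2 - x 2 := rfl
      have e3 : (boost (-s) p - x) 3 = p 3 - x 3 := rfl
      show Real.sqrt (((boost (-s) p - x) 1) ^ 2 + ((boost (-s) p - x) 2) ^ 2
          + ((boost (-s) p - x) 3) ^ 2) < (boost (-s) p - x) 0
      rw [e0, e1, e2, e3, Real.cosh_neg, Real.sinh_neg]
      rw [Real.sqrt_lt' (by linarith)]
      nlinarith [h2]
  · rintro ⟨h1, h2⟩
    obtain ⟨o, ⟨s, rfl⟩, c, hc, hsum⟩ := Set.mem_add.1 h1
    obtain ⟨o', ⟨t, rfl⟩, d, hd, hdiff⟩ := Set.mem_sub.1 h2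
    have hca := cone_abs hc
    have hda := cone_abs hd
    have hca1 : -(c 0) < c 1 ∧ c 1 < c 0 := abs_lt.1 hca
    have hda1 : -(d 0) < d 1 ∧ d 1 < d 0 := abs_lt.1 hda
    have hpp : 0 < p 0 + p 1 := by
      have := neg_abs_le (p 0); linarith
    have hpm : 0 < p 1 - p 0 := by
      have := le_abs_self (p 0); linarith
    have hs0 : p 0 * Real.cosh s + p 1 * Real.sinh s + c 0 = x 0 := congrFun hsum 0
    have hs1 : p 0 * Real.sinh s + p 1 * Real.cosh s + c 1 = x 1 := congrFun hsum 1
    have ht0 : p 0 * Real.cosh t + p 1 * Real.sinh t - d 0 = x 0 := congrFun hdiff 0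
    have ht1 : p 0 * Real.sinh t + p 1 * Real.cosh t - d 1 = x 1 := congrFun hdiff 1
    have hE1 : p 0 * Real.cosh s + p 1 * Real.sinh s
        + (p 0 * Real.sinh s + p 1 * Real.cosh s) = (p 0 + p 1) * Real.exp s := by
      rw [← Real.cosh_add_sinh]; ring
    have hE2 : p 0 * Real.sinh t + p 1 * Real.cosh t
        - (p 0 * Real.cosh t + p 1 * Real.sinh t) = (p 1 - p 0) * Real.exp (-t) := by
      rw [← Real.cosh_sub_sinh]; ring
    have hP1 : 0 < (p 0 + p 1) * Real.exp s := mul_pos hpp (Real.exp_pos s)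
    have hP2 : 0 < (p 1 - p 0) * Real.exp (-t) := mul_pos hpm (Real.exp_pos (-t))
    show |x 0| < x 1
    rw [abs_lt]
    constructor
    · -- -x1 < x0, i.e. 0 < x0 + x1
      linarith [hca1.1]
    · -- x0 < x1
      linarith [hda1.2]
end

section
/- In ℝ⁴ = ℝ² × ℝ² with coordinates (x₀, x₁, y), y ∈ ℝ², let Λ_s(x₀, x₁, y) = (x₀ cosh s + x₁ sinh s, x₀ sinh s + x₁ cosh s, y) be the boost flow. Let f : ℝ² → ℝ be a smooth function with f ≥ 0, and let λ > 0. Define the translated deformed wedge W_{f+λ} = {(x₀, x₁, y) ∈ ℝ⁴ : |x₀ − f(y) − λ| < x₁ − f(y) − λ} and the surface A_{f+λ} = {(x₀, x₁, y) ∈ ℝ⁴ : x₀ = −x₁ + 2(f(y) + λ) and x₁ > f(y) + λ}. Then W_{f+λ} equals the positive half-orbit of A_{f+λ} under the boost flow: W_{f+λ} = {Λ_s(p) : p ∈ A_{f+λ}, s > 0}. -/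
open Set

/-- The Lorentz boost of rapidity `s` in the `x₁` direction, acting trivially on the
transverse coordinates `y ∈ ℝ²`. -/
noncomputable def boost2 (s : ℝ) (x : ℝ × ℝ × (Fin 2 → ℝ)) : ℝ × ℝ × (Fin 2 → ℝ) :=
  (x.1 * Real.cosh s + x.2.1 * Real.sinh s,
   x.1 * Real.sinh s + x.2.1 * Real.cosh s, x.2.2)

/-- The translated deformed wedge `W_{f+λ}` equals the positive half-orbit (strip) under
the boost flow of the achronal surface
`A_{f+λ} = {x₀ = -x₁ + 2(f(y)+λ), x₁ > f(y)+λ}`. -/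
theorem stmt_13 (f : (Fin 2 → ℝ) → ℝ) (hf : ContDiff ℝ (⊤ : ℕ∞) f) (hfpos : ∀ y, 0 ≤ f y)
    (lam : ℝ) (hlam : 0 < lam) :
    {x : ℝ × ℝ × (Fin 2 → ℝ) | |x.1 - f x.2.2 - lam| < x.2.1 - f x.2.2 - lam}
      = {q : ℝ × ℝ × (Fin 2 → ℝ) | ∃ p : ℝ × ℝ × (Fin 2 → ℝ),
          (p.1 = -p.2.1 + 2 * (f p.2.2 + lam) ∧ f p.2.2 + lam < p.2.1) ∧
          ∃ s : ℝ, 0 < s ∧ q = boost2 s p} := by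
  ext ⟨x0, x1, y⟩
  simp only [mem_setOf_eq, boost2]
  constructor
  · intro h
    rw [abs_lt] at h
    obtain ⟨h1, h2⟩ := h
    set c := f y + lam with hc
    have hcpos : 0 < c := by have := hfpos y; linarith
    have hu : 2 * c < x0 + x1 := by linarith
    have hv : x0 - x1 < 0 := by linarith
    set t : ℝ := (x0 + x1) / (2 * c) with ht
    have htpos : 1 < t := by
      rw [ht, lt_div_iff₀ (by linarith)]; linarith
    have ht0 : 0 < t := by linarith
    set s : ℝ := Real.log t with hs
    have hs0 : 0 < s := Real.log_pos htpos
    have hexp : Real.exp s = t := Real.exp_log ht0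
    have hexpneg : Real.exp (-s) = t⁻¹ := by
      rw [Real.exp_neg, hexp]
    have hcosh : Real.cosh s = (t + t⁻¹) / 2 := by
      rw [Real.cosh_eq, hexp, hexpneg]
    have hsinh : Real.sinh s = (t - t⁻¹) / 2 := by
      rw [Real.sinh_eq, hexp, hexpneg]
    have hct : c * t = (x0 + x1) / 2 := by
      rw [ht]; field_simp
    refine ⟨(c + (x0 - x1) * t / 2, c - (x0 - x1) * t / 2, y), ⟨by dsimp; ring, ?_⟩,
      s, hs0, ?_⟩
    · dsimp
      nlinarith [mul_pos (neg_pos.mpr hv) ht0]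
    · dsimp
      rw [hcosh, hsinh]
      have htne : t ≠ 0 := ne_of_gt ht0
      refine Prod.ext ?_ (Prod.ext ?_ rfl)
      · dsimp; field_simp; nlinarith [hct]
      · dsimp; field_simp; nlinarith [hct]
  · rintro ⟨⟨p0, p1, py⟩, ⟨hp0, hp1⟩, s, hs0, heq⟩
    dsimp at hp0 hp1
    obtain ⟨h0, h1, hy⟩ : x0 = p0 * Real.cosh s + p1 * Real.sinh s ∧
        x1 = p0 * Real.sinh s + p1 * Real.cosh s ∧ y = py := by
      refine ⟨congrArg Prod.fst heq, congrArg (Prod.fst ∘ Prod.snd) heq,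
        congrArg (Prod.snd ∘ Prod.snd) heq⟩
    subst hy
    set c := f y + lam with hc
    have hcpos : 0 < c := by have := hfpos y; linarith
    have hsum : x0 + x1 = (p0 + p1) * Real.exp s := by
      rw [h0, h1, ← Real.cosh_add_sinh s]; ring
    have hdiff : x0 - x1 = (p0 - p1) * Real.exp (-s) := by
      rw [h0, h1, ← Real.cosh_sub_sinh s]; ring
    have hp0p1 : p0 + p1 = 2 * c := by linarith
    have hexpgt : 1 < Real.exp s := Real.one_lt_exp_iff.mpr hs0
    have hexpneg : 0 < Real.exp (-s) := Real.exp_pos _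
    rw [abs_lt]
    constructor
    · have : 2 * c < (p0 + p1) * Real.exp s := by
        rw [hp0p1]; nlinarith
      rw [← hsum] at this; linarith
    · have hneg : (p0 - p1) * Real.exp (-s) < 0 := by
        apply mul_neg_of_neg_of_pos _ hexpneg
        linarith
      rw [← hdiff] at hneg; linarith
end

section
/- Fix M > 0 and let Λ_s act on ℝ² × S² (coordinates (t, x, Ω), with S² the unit 2-sphere in ℝ³) by Λ_s(t, x, Ω) = (t cosh(s/4M) + x sinh(s/4M), t sinh(s/4M) + x cosh(s/4M), Ω). For λ > 0, let W_{+,λ} = {(t, x, Ω) : x − λ > |t − λ|} be the translated right (exterior Schwarzschild) wedge, and let h_λ = {(t, x, Ω) : t = −x + 2λ and x > λ} be the translated right-past horizon. Then W_{+,λ} equals the positive half-orbit of h_λ under the Killing flow: W_{+,λ} = {Λ_s(p) : p ∈ h_λ, s > 0}. -/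
open Set

/-- The unit 2-sphere. -/
noncomputable def TwoSphere := Metric.sphere (0 : EuclideanSpace ℝ (Fin 3)) 1

/-- The time-translation Killing flow of the Kruskal spacetime of mass `M`, acting on
the Kruskal-Szekeres coordinates `(t, x, Ω)` as the hyperbolic rotation of rapidity
`s/4M` on `(t,x)` and trivially on the sphere component. -/
noncomputable def kruskalFlow (M s : ℝ) (x : ℝ × ℝ × TwoSphere) : ℝ × ℝ × TwoSphere :=
  (x.1 * Real.cosh (s / (4 * M)) + x.2.1 * Real.sinh (s / (4 * M)),
   x.1 * Real.sinh (s / (4 * M)) + x.2.1 * Real.cosh (s / (4 * M)), x.2.2)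

/-- The translated right wedge `W_{+,λ} = {x - λ > |t - λ|}` of the Kruskal spacetime
equals the positive half-orbit, under the Killing flow, of the translated right-past
horizon `h_λ = {t = -x + 2λ, x > λ}`. -/
theorem stmt_14 (M : ℝ) (hM : 0 < M) (lam : ℝ) (hlam : 0 < lam) :
    {q : ℝ × ℝ × TwoSphere | |q.1 - lam| < q.2.1 - lam}
      = {q : ℝ × ℝ × TwoSphere | ∃ p : ℝ × ℝ × TwoSphere,
          (p.1 = -p.2.1 + 2 * lam ∧ lam < p.2.1) ∧
          ∃ s : ℝ, 0 < s ∧ q = kruskalFlow M s p} := by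
  ext q
  obtain ⟨t, x, Ω⟩ := q
  simp only [Set.mem_setOf_eq]
  constructor
  · intro h
    rw [abs_lt] at h
    obtain ⟨h1, h2⟩ := h
    have hb0 : 0 < x - t := by linarith
    have ha0 : 2 * lam < t + x := by linarith
    have hlam2 : (0:ℝ) < 2 * lam := by linarith
    set E : ℝ := (t + x) / (2 * lam) with hE
    have hE1 : 1 < E := (one_lt_div hlam2).2 ha0
    have hE0 : 0 < E := by linarith
    set r := Real.log E with hr
    have hr0 : 0 < r := Real.log_pos hE1
    have hexp : Real.exp r = E := Real.exp_log hE0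
    have hEa : E * (2 * lam) = t + x := by rw [hE]; field_simp
    refine ⟨(2*lam - (lam + (x - t)*E/2), lam + (x - t)*E/2, Ω),
      ⟨by ring, by nlinarith⟩, 4*M*r, by positivity, ?_⟩
    have hs : (4*M*r) / (4*M) = r := by field_simp
    have hcosh : Real.cosh r = (E + E⁻¹)/2 := by
      rw [Real.cosh_eq, hexp, Real.exp_neg, hexp]
    have hsinh : Real.sinh r = (E - E⁻¹)/2 := by
      rw [Real.sinh_eq, hexp, Real.exp_neg, hexp]
    simp only [kruskalFlow, hs, hcosh, hsinh, Prod.mk.injEq]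
    refine ⟨?_, ?_, trivial⟩ <;> · field_simp; nlinarith [hEa, sq_nonneg E]
  · rintro ⟨⟨pt, px, pΩ⟩, ⟨hp1, hp2⟩, s, hs, hq⟩
    simp only at hp1 hp2
    set r := s / (4*M) with hr
    have hr0 : 0 < r := by positivity
    have h1 : 1 < Real.exp r := by nlinarith [Real.add_one_le_exp r]
    have h2 : 0 < Real.exp (-r) := Real.exp_pos _
    simp only [kruskalFlow, Prod.mk.injEq] at hq
    obtain ⟨ht, hx, -⟩ := hq
    rw [← hr] at ht hx
    have hsum : t + x = 2 * lam * Real.exp r := by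
      rw [ht, hx, ← Real.cosh_add_sinh r, hp1]; ring
    have hdiff : x - t = (2 * px - 2 * lam) * Real.exp (-r) := by
      rw [ht, hx, ← Real.cosh_sub_sinh r, hp1]; ring
    rw [abs_lt]
    constructor <;> nlinarith [hsum, hdiff]
end
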